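/- Let Ω ⊆ ℂ be open, U: Ω → ℝ smooth, and let ψ₁, ψ₂: Ω → ℂ be smooth functions satisfying the Dirac equation ∂̄ψ₁ = Uψ₂ and ∂ψ₂ = −Uψ₁. Define P₁ = (i/2)(ψ₁² + conj(ψ₂)²), P₂ = (1/2)(conj(ψ₂)² − ψ₁²), P₃ = ψ₁·conj(ψ₂). Then for each k = 1, 2, 3 one has ∂̄P_k = ∂(conj(P_k)) on Ω; equivalently, each real-valued 1-form P_k dz + conj(P_k) dz̄ is closed, so the Weierstrass representation formulas define surface coordinates x^k on any simply connected subdomain. -/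

import Mathlib

open ComplexConjugate

/-- The Wirtinger derivative `∂g = (∂g/∂x − i ∂g/∂y)/2` of `g : ℂ → ℂ`. -/
noncomputable def wdz (g : ℂ → ℂ) (z : ℂ) : ℂ :=
  (fderiv ℝ g z 1 - Complex.I * fderiv ℝ g z Complex.I) / 2

/-- The Wirtinger derivative `∂̄g = (∂g/∂x + i ∂g/∂y)/2` of `g : ℂ → ℂ`. -/
noncomputable def wdzbar (g : ℂ → ℂ) (z : ℂ) : ℂ :=
  (fderiv ℝ g z 1 + Complex.I * fderiv ℝ g z Complex.I) / 2

lemma fderiv_conj_apply (g : ℂ → ℂ) (z v : ℂ) :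
    fderiv ℝ (fun w => conj (g w)) z v = conj (fderiv ℝ g z v) := by
  have h : (fun w => conj (g w)) = (Complex.conjCLE : ℂ ≃L[ℝ] ℂ) ∘ g := by
    funext w; simp [Complex.conjCLE_apply]
  rw [h, Complex.conjCLE.comp_fderiv]
  simp [Complex.conjCLE_apply]

lemma wdz_conj (g : ℂ → ℂ) (z : ℂ) :
    wdz (fun w => conj (g w)) z = conj (wdzbar g z) := by
  unfold wdz wdzbar
  rw [fderiv_conj_apply, fderiv_conj_apply, map_div₀, map_add, map_mul]
  simp only [Complex.conj_I, map_ofNat]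
  ring

lemma wdzbar_conj (g : ℂ → ℂ) (z : ℂ) :
    wdzbar (fun w => conj (g w)) z = conj (wdz g z) := by
  unfold wdz wdzbar
  rw [fderiv_conj_apply, fderiv_conj_apply, map_div₀, map_sub, map_mul]
  simp only [Complex.conj_I, map_ofNat]
  ring

lemma wdz_mul {f g : ℂ → ℂ} {z : ℂ} (hf : DifferentiableAt ℝ f z)
    (hg : DifferentiableAt ℝ g z) :
    wdz (fun w => f w * g w) z = f z * wdz g z + g z * wdz f z := by
  unfold wdz
  rw [fderiv_fun_mul hf hg]
  simp only [ContinuousLinearMap.add_apply, ContinuousLinearMap.smul_apply, smul_eq_mul]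
  ring

lemma wdzbar_mul {f g : ℂ → ℂ} {z : ℂ} (hf : DifferentiableAt ℝ f z)
    (hg : DifferentiableAt ℝ g z) :
    wdzbar (fun w => f w * g w) z = f z * wdzbar g z + g z * wdzbar f z := by
  unfold wdzbar
  rw [fderiv_fun_mul hf hg]
  simp only [ContinuousLinearMap.add_apply, ContinuousLinearMap.smul_apply, smul_eq_mul]
  ring

lemma wdz_sub {f g : ℂ → ℂ} {z : ℂ} (hf : DifferentiableAt ℝ f z)
    (hg : DifferentiableAt ℝ g z) :
    wdz (fun w => f w - g w) z = wdz f z - wdz g z := by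
  unfold wdz
  rw [fderiv_fun_sub hf hg]
  simp only [ContinuousLinearMap.sub_apply]
  ring

lemma wdzbar_sub {f g : ℂ → ℂ} {z : ℂ} (hf : DifferentiableAt ℝ f z)
    (hg : DifferentiableAt ℝ g z) :
    wdzbar (fun w => f w - g w) z = wdzbar f z - wdzbar g z := by
  unfold wdzbar
  rw [fderiv_fun_sub hf hg]
  simp only [ContinuousLinearMap.sub_apply]
  ring

lemma wdz_const_mul (c : ℂ) {f : ℂ → ℂ} {z : ℂ} (hf : DifferentiableAt ℝ f z) :
    wdz (fun w => c * f w) z = c * wdz f z := by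
  unfold wdz
  rw [fderiv_const_mul hf]
  simp only [ContinuousLinearMap.smul_apply, smul_eq_mul]
  ring

lemma wdzbar_const_mul (c : ℂ) {f : ℂ → ℂ} {z : ℂ} (hf : DifferentiableAt ℝ f z) :
    wdzbar (fun w => c * f w) z = c * wdzbar f z := by
  unfold wdzbar
  rw [fderiv_const_mul hf]
  simp only [ContinuousLinearMap.smul_apply, smul_eq_mul]
  ring

/-- If `(ψ₁, ψ₂)` solves the Dirac equation `∂̄ψ₁ = Uψ₂`, `∂ψ₂ = −Uψ₁`
with real potential `U` on an open set `Ω`, then the Weierstrass differentials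
`P₁ = (i/2)(ψ₁² + conj(ψ₂)²)`, `P₂ = (1/2)(conj(ψ₂)² − ψ₁²)`, `P₃ = ψ₁·conj(ψ₂)`
satisfy `∂̄P_k = ∂(conj P_k)` on `Ω`, i.e. the forms `P_k dz + conj(P_k) dz̄` are closed. -/
theorem stmt4 (Ω : Set ℂ) (hΩ : IsOpen Ω)
    (U : ℂ → ℝ) (hU : ContDiffOn ℝ (⊤ : ℕ∞) U Ω)
    (ψ₁ ψ₂ : ℂ → ℂ) (hψ₁ : ContDiffOn ℝ (⊤ : ℕ∞) ψ₁ Ω) (hψ₂ : ContDiffOn ℝ (⊤ : ℕ∞) ψ₂ Ω)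
    (hd1 : ∀ z ∈ Ω, wdzbar ψ₁ z = (U z : ℂ) * ψ₂ z)
    (hd2 : ∀ z ∈ Ω, wdz ψ₂ z = -(U z : ℂ) * ψ₁ z)
    (P₁ P₂ P₃ : ℂ → ℂ)
    (hP₁ : P₁ = fun z => Complex.I / 2 * (ψ₁ z ^ 2 + (conj (ψ₂ z)) ^ 2))
    (hP₂ : P₂ = fun z => (1 : ℂ) / 2 * ((conj (ψ₂ z)) ^ 2 - ψ₁ z ^ 2))
    (hP₃ : P₃ = fun z => ψ₁ z * conj (ψ₂ z)) :
    ∀ z ∈ Ω,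
      wdzbar P₁ z = wdz (fun w => conj (P₁ w)) z ∧
      wdzbar P₂ z = wdz (fun w => conj (P₂ w)) z ∧
      wdzbar P₃ z = wdz (fun w => conj (P₃ w)) z := by
  intro z hz
  have hψ₁' : DifferentiableAt ℝ ψ₁ z :=
    (hψ₁.contDiffAt (hΩ.mem_nhds hz)).differentiableAt (by simp)
  have hψ₂' : DifferentiableAt ℝ ψ₂ z :=
    (hψ₂.contDiffAt (hΩ.mem_nhds hz)).differentiableAt (by simp)
  have hcψ₁ : DifferentiableAt ℝ (fun w => conj (ψ₁ w)) z := hψ₁'.star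
  have hcψ₂ : DifferentiableAt ℝ (fun w => conj (ψ₂ w)) z := hψ₂'.star
  have hc1 : wdz (fun w => conj (ψ₁ w)) z = (U z : ℂ) * conj (ψ₂ z) := by
    rw [wdz_conj, hd1 z hz, map_mul, Complex.conj_ofReal]
  have hc2 : wdzbar (fun w => conj (ψ₂ w)) z = -(U z : ℂ) * conj (ψ₁ z) := by
    rw [wdzbar_conj, hd2 z hz]
    rw [map_mul, map_neg, Complex.conj_ofReal]
  -- key computation for Q = c·ψ₁² − c̄·(conj ψ₂)²
  have key : ∀ (c : ℂ) (Q : ℂ → ℂ),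
      Q = (fun w => c * (ψ₁ w * ψ₁ w) - conj c * (conj (ψ₂ w) * conj (ψ₂ w))) →
      wdzbar Q z = wdz (fun w => conj (Q w)) z := by
    intro c Q hQ
    subst hQ
    beta_reduce
    have hsq1 : DifferentiableAt ℝ (fun w => ψ₁ w * ψ₁ w) z := hψ₁'.mul hψ₁'
    have hsq2 : DifferentiableAt ℝ (fun w => conj (ψ₂ w) * conj (ψ₂ w)) z :=
      hcψ₂.mul hcψ₂
    have hsq1' : DifferentiableAt ℝ (fun w => conj (ψ₁ w) * conj (ψ₁ w)) z :=
      hcψ₁.mul hcψ₁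
    have hsq2' : DifferentiableAt ℝ (fun w => ψ₂ w * ψ₂ w) z := hψ₂'.mul hψ₂'
    have hconjQ : (fun w => conj (c * (ψ₁ w * ψ₁ w) -
          conj c * (conj (ψ₂ w) * conj (ψ₂ w)))) =
        (fun w => conj c * (conj (ψ₁ w) * conj (ψ₁ w)) - c * (ψ₂ w * ψ₂ w)) := by
      funext w
      simp only [map_sub, map_mul, Complex.conj_conj]
    rw [hconjQ,
      wdzbar_sub ((differentiableAt_const c).fun_mul hsq1)
        ((differentiableAt_const (conj c)).fun_mul hsq2),
      wdz_sub ((differentiableAt_const (conj c)).fun_mul hsq1')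
        ((differentiableAt_const c).fun_mul hsq2'),
      wdzbar_const_mul c hsq1, wdzbar_const_mul (conj c) hsq2,
      wdz_const_mul (conj c) hsq1', wdz_const_mul c hsq2',
      wdzbar_mul hψ₁' hψ₁', wdzbar_mul hcψ₂ hcψ₂,
      wdz_mul hcψ₁ hcψ₁, wdz_mul hψ₂' hψ₂',
      hd1 z hz, hc2, hc1, hd2 z hz]
    ring
  refine ⟨?_, ?_, ?_⟩
  · refine key (Complex.I / 2) P₁ ?_
    rw [hP₁]
    funext w
    have : conj (Complex.I / 2) = -(Complex.I / 2) := by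
      rw [map_div₀, Complex.conj_I, map_ofNat]; ring
    rw [this]
    ring
  · refine key (-(1 : ℂ) / 2) P₂ ?_
    rw [hP₂]
    funext w
    have : conj (-(1 : ℂ) / 2) = -(1 : ℂ) / 2 := by
      rw [map_div₀, map_neg, map_one, map_ofNat]
    rw [this]
    ring
  · subst hP₃
    beta_reduce
    have hconjP₃ : (fun w => conj (ψ₁ w * conj (ψ₂ w))) =
        (fun w => conj (ψ₁ w) * ψ₂ w) := by
      funext w
      simp only [map_mul, Complex.conj_conj]
    rw [hconjP₃, wdzbar_mul hψ₁' hcψ₂, wdz_mul hcψ₁ hψ₂',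
      hd1 z hz, hc2, hc1, hd2 z hz]
    ring
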